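/- A graph admits a proper straight-line drawing with spanning ratio 1 if and only if it is isomorphic to the point visibility graph of some finite point set in ℝ². -/

import Mathlib

noncomputable def wlen {V : Type*} {G : SimpleGraph V} (ρ : V → EuclideanSpace ℝ (Fin 2)) :
    ∀ {u v : V}, G.Walk u v → ℝ
  | _, _, SimpleGraph.Walk.nil => 0
  | u, _, SimpleGraph.Walk.cons (v := b) _ p => dist (ρ u) (ρ b) + wlen ρ p

/-- The point visibility graph of a finite point set `P ⊂ ℝ²`: two distinct points are adjacent
iff the open segment between them contains no point of `P`. -/
def visGraph (P : Finset (EuclideanSpace ℝ (Fin 2))) : SimpleGraph P where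
  Adj p q := p ≠ q ∧ ∀ r : P, (r : EuclideanSpace ℝ (Fin 2)) ∉
      openSegment ℝ (p : EuclideanSpace ℝ (Fin 2)) (q : EuclideanSpace ℝ (Fin 2))
  symm := by
    constructor
    rintro p q ⟨hne, h⟩
    exact ⟨hne.symm, by rw [openSegment_symm]; exact h⟩
  loopless := by constructor; rintro p ⟨hne, -⟩; exact hne rfl

/-!
If a walk from `u` to `v` has length `|ρ u ρ v|`, all its vertices lie on the segment
`[ρ u, ρ v]`; so when no vertex lies strictly between `ρ u` and `ρ v`, the walk is the single edge
`uv`. Together with properness this says that a graph drawn properly with spanning ratio 1 is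
exactly the visibility graph of its vertex points. In the other direction, the points of `P` on `[p, q]` form a
straight path from `p` to `q` in the visibility graph, found by splitting `[p, q]` at any point of
`P` strictly inside it and inducting on the number of such points.
-/

open SimpleGraph Finset

local notation "E2" => EuclideanSpace ℝ (Fin 2)

section Betweenness

variable {E : Type*} [AddCommGroup E] [Module ℝ E]

lemma sbtw_iff_mem_openSegment {x y z : E} (hxz : x ≠ z) :
    Sbtw ℝ x y z ↔ y ∈ openSegment ℝ x z := by
  rw [Sbtw, ← mem_segment_iff_wbtw, ← insert_endpoints_openSegment]
  constructor
  · rintro ⟨rfl | rfl | h, hx, hz⟩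
    exacts [absurd rfl hx, absurd rfl hz, h]
  · intro h
    refine ⟨Or.inr (Or.inr h), ?_, ?_⟩
    · rintro rfl; exact hxz (left_mem_openSegment_iff.1 h)
    · rintro rfl; exact hxz (right_mem_openSegment_iff.1 h)

lemma Sbtw.openSegment_subset_left {x y z : E} (h : Sbtw ℝ x y z) :
    openSegment ℝ x y ⊆ openSegment ℝ x z := fun _ hs =>
  (sbtw_iff_mem_openSegment h.left_ne_right).1
    (h.trans_left ((sbtw_iff_mem_openSegment h.left_ne).2 hs))

lemma ncard_inter_openSegment_lt {P : Set E} (hP : P.Finite) {x y z : E} (h : Sbtw ℝ x y z)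
    (hy : y ∈ P) : (P ∩ openSegment ℝ x y).ncard < (P ∩ openSegment ℝ x z).ncard := by
  refine Set.ncard_lt_ncard (Set.ssubset_iff_of_subset ?_ |>.2 ⟨y, ?_, ?_⟩) (hP.inter_of_left _)
  · exact Set.inter_subset_inter_right P h.openSegment_subset_left
  · exact ⟨hy, (sbtw_iff_mem_openSegment h.left_ne_right).1 h⟩
  · simp [right_mem_openSegment_iff, h.left_ne]

end Betweenness

section WalkLength

variable {V W : Type*} {G : SimpleGraph V} {H : SimpleGraph W} (ρ : V → E2)

@[simp] lemma wlen_nil (u : V) : wlen ρ (Walk.nil : G.Walk u u) = 0 := rfl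

@[simp] lemma wlen_cons {u b v : V} (h : G.Adj u b) (p : G.Walk b v) :
    wlen ρ (Walk.cons h p) = dist (ρ u) (ρ b) + wlen ρ p := rfl

lemma wlen_append {u v w : V} (p : G.Walk u v) (q : G.Walk v w) :
    wlen ρ (p.append q) = wlen ρ p + wlen ρ q := by
  induction p with
  | nil => simp
  | cons h p ih => simp [ih, add_assoc]

@[simp] lemma wlen_copy {u v u' v' : V} (p : G.Walk u v) (hu : u = u') (hv : v = v') :
    wlen ρ (p.copy hu hv) = wlen ρ p := by
  subst hu hv; rfl

@[simp] lemma wlen_map (f : G →g H) (σ : W → E2) {u v : V} (p : G.Walk u v) :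
    wlen σ (p.map f) = wlen (σ ∘ f) p := by
  induction p with
  | nil => rfl
  | cons h p ih => simp [ih]

lemma dist_le_wlen {u v : V} (p : G.Walk u v) : dist (ρ u) (ρ v) ≤ wlen ρ p := by
  induction p with
  | nil => simp
  | @cons u b v h p ih =>
    calc dist (ρ u) (ρ v) ≤ dist (ρ u) (ρ b) + dist (ρ b) (ρ v) := dist_triangle _ _ _
      _ ≤ wlen ρ (Walk.cons h p) := by rw [wlen_cons]; gcongr

lemma exists_walk_wlen_comp_iso_eq_dist (e : G ≃g H) (σ : W → E2)
    (hspan : ∀ x y, ∃ p : H.Walk x y, wlen σ p = dist (σ x) (σ y)) (u v : V) :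
    ∃ p : G.Walk u v, wlen (σ ∘ e) p = dist (σ (e u)) (σ (e v)) := by
  obtain ⟨p, hp⟩ := hspan (e u) (e v)
  refine ⟨(p.map e.symm.toHom).copy (e.symm_apply_apply u) (e.symm_apply_apply v), ?_⟩
  simpa [Function.comp_def] using hp

end WalkLength

section Drawing

variable {V : Type*} {G : SimpleGraph V} {ρ : V → E2}

lemma adj_of_wlen_eq_dist (hinj : Function.Injective ρ) {u v : V} (huv : u ≠ v)
    (hvis : ∀ w, ρ w ∉ openSegment ℝ (ρ u) (ρ v)) (p : G.Walk u v)
    (hp : wlen ρ p = dist (ρ u) (ρ v)) : G.Adj u v := by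
  cases p with
  | nil => exact absurd rfl huv
  | @cons _ b _ h p =>
    by_cases hbv : b = v
    · exact hbv ▸ h
    have hwbtw : Wbtw ℝ (ρ u) (ρ b) (ρ v) := by
      rw [← dist_add_dist_eq_iff]
      have := dist_le_wlen ρ p
      have := dist_triangle (ρ u) (ρ b) (ρ v)
      rw [wlen_cons] at hp
      linarith
    have hsbtw : Sbtw ℝ (ρ u) (ρ b) (ρ v) :=
      ⟨hwbtw, hinj.ne h.ne.symm, hinj.ne hbv⟩
    exact absurd ((sbtw_iff_mem_openSegment (hinj.ne huv)).1 hsbtw) (hvis b)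

lemma adj_iff_forall_not_mem_openSegment (hinj : Function.Injective ρ)
    (hproper : ∀ u v, G.Adj u v → ∀ w, ρ w ∉ openSegment ℝ (ρ u) (ρ v))
    (hspan : ∀ u v, ∃ p : G.Walk u v, wlen ρ p = dist (ρ u) (ρ v)) {u v : V} :
    G.Adj u v ↔ u ≠ v ∧ ∀ w, ρ w ∉ openSegment ℝ (ρ u) (ρ v) := by
  refine ⟨fun h => ⟨h.ne, hproper u v h⟩, fun ⟨huv, hvis⟩ => ?_⟩
  obtain ⟨p, hp⟩ := hspan u v
  exact adj_of_wlen_eq_dist hinj huv hvis p hp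

lemma nonempty_iso_visGraph_image [Fintype V] (hinj : Function.Injective ρ)
    (hadj : ∀ u v, G.Adj u v ↔ u ≠ v ∧ ∀ w, ρ w ∉ openSegment ℝ (ρ u) (ρ v)) :
    Nonempty (G ≃g visGraph (univ.image ρ)) := by
  classical
  let e : V ≃ univ.image ρ := Equiv.ofBijective (fun v => ⟨ρ v, mem_image_of_mem ρ (mem_univ v)⟩)
    ⟨fun a b hab => hinj (congrArg Subtype.val hab),
     fun ⟨x, hx⟩ => by obtain ⟨v, -, rfl⟩ := mem_image.1 hx; exact ⟨v, rfl⟩⟩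
  refine ⟨⟨e, fun {a b} => ?_⟩⟩
  change e a ≠ e b ∧ (∀ r, _) ↔ _
  rw [hadj, e.injective.ne_iff, ← e.forall_congr_right]
  rfl

end Drawing

theorem visGraph_exists_walk_wlen_eq_dist (P : Finset E2) (p q : P) :
    ∃ w : (visGraph P).Walk p q, wlen Subtype.val w = dist (p : E2) q := by
  induction hn : ((P : Set E2) ∩ openSegment ℝ (p : E2) q).ncard using Nat.strong_induction_on
    generalizing p q with
  | _ n ih =>
    by_cases hadj : (visGraph P).Adj p q
    · exact ⟨Walk.cons hadj Walk.nil, by simp⟩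
    rcases eq_or_ne p q with rfl | hpq
    · exact ⟨Walk.nil, by simp⟩
    obtain ⟨r, hr⟩ : ∃ r : P, (r : E2) ∈ openSegment ℝ (p : E2) q := by
      by_contra! h
      exact hadj ⟨hpq, h⟩
    have hs : Sbtw ℝ (p : E2) r q :=
      (sbtw_iff_mem_openSegment (Subtype.coe_injective.ne hpq)).2 hr
    have hlt₁ := ncard_inter_openSegment_lt P.finite_toSet hs r.2
    have hlt₂ := ncard_inter_openSegment_lt P.finite_toSet hs.symm r.2
    rw [openSegment_symm _ (q : E2), openSegment_symm _ (q : E2)] at hlt₂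
    obtain ⟨w₁, hw₁⟩ := ih _ (hn ▸ hlt₁) p r rfl
    obtain ⟨w₂, hw₂⟩ := ih _ (hn ▸ hlt₂) r q rfl
    exact ⟨w₁.append w₂, by rw [wlen_append, hw₁, hw₂, hs.wbtw.dist_add_dist]⟩

/-- A graph admits a proper straight-line drawing with spanning ratio 1 iff it is
(isomorphic to) a point visibility graph. -/
theorem proper_drawing_spanning_ratio_one_iff_pvg
    {V : Type*} [Fintype V] (G : SimpleGraph V) :
    (∃ ρ : V → EuclideanSpace ℝ (Fin 2), Function.Injective ρ ∧
      (∀ u v : V, G.Adj u v → ∀ w : V, ρ w ∉ openSegment ℝ (ρ u) (ρ v)) ∧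
      ∀ u v : V, ∃ p : G.Walk u v, wlen ρ p = dist (ρ u) (ρ v)) ↔
    (∃ P : Finset (EuclideanSpace ℝ (Fin 2)), Nonempty (G ≃g visGraph P)) := by
  constructor
  · rintro ⟨ρ, hinj, hproper, hspan⟩
    exact ⟨_, nonempty_iso_visGraph_image hinj fun _ _ =>
      adj_iff_forall_not_mem_openSegment hinj hproper hspan⟩
  · rintro ⟨P, ⟨e⟩⟩
    refine ⟨Subtype.val ∘ e, Subtype.val_injective.comp e.injective, ?_,
      exists_walk_wlen_comp_iso_eq_dist e _ (visGraph_exists_walk_wlen_eq_dist P)⟩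
    exact fun u v h w => (e.map_rel_iff.2 h).2 (e w)
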